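/- arXiv:2011.09433 — 2 statements merged into one kernel-verified Lean document; each statement's English description precedes it below -/
import Mathlib

section
/- Let s = (s₁,s₂) and s̃ = (s̃₁,s̃₂) with all components ≥ 1, let j, r, j̃, r̃ ∈ ℕ₀², and let f, g : ℝ → ℂ be max{s₁,s̃₁}-times resp. max{s₂,s̃₂}-times differentiable. If u ∈ D_j^{r,s}(f,g) and ũ ∈ D_{j̃}^{r̃,s̃}(f,g), then u·ũ ∈ D_{j+j̃}^{r+r̃, t}(f,g), where t := (max{s₁,s̃₁}, max{s₂,s̃₂}); consequently u·ũ ∈ D_{j+j̃}^{r+r̃, s+s̃−(1,1)}(f,g). -/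
open scoped BigOperators

/-- The index set `𝓘_j^{r,s}` of multi-indices. -/
def Iset (j r s : ℕ × ℕ) : Set ((Fin s.1 → ℕ) × (Fin s.2 → ℕ)) :=
  {α | (∑ p, α.1 p) = j.1 ∧ (∑ p, α.2 p) = j.2 ∧
    (∑ p : Fin s.1, (p.1 + 1) * α.1 p) = r.1 ∧
    (∑ p : Fin s.2, (p.1 + 1) * α.2 p) = r.2}

/-- The monomial `(f⁽¹⁾)^{α₁}⋯(f^{(s₁)})^{α_{s₁}}(g⁽¹⁾)^{α_{s₁+1}}⋯(g^{(s₂)})^{α_{s₁+s₂}}`. -/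
noncomputable def Dmonomial (s : ℕ × ℕ) (f g : ℝ → ℂ)
    (α : (Fin s.1 → ℕ) × (Fin s.2 → ℕ)) : ℝ → ℂ :=
  fun x => (∏ p : Fin s.1, (iteratedDeriv (p.1 + 1) f x) ^ α.1 p) *
    (∏ p : Fin s.2, (iteratedDeriv (p.1 + 1) g x) ^ α.2 p)

/-- The class `D_j^{r,s}(f,g)`. -/
noncomputable def Dset (j r s : ℕ × ℕ) (f g : ℝ → ℂ) : Set (ℝ → ℂ) :=
  {u | ∃ c : ((Fin s.1 → ℕ) × (Fin s.2 → ℕ)) → ℂ,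
    (Function.support c).Finite ∧ (∀ α, c α ≠ 0 → α ∈ Iset j r s) ∧
    u = fun x => ∑ᶠ α, c α * Dmonomial s f g α x}

/-!
`D_j^{r,s}(f,g)` is the `ℂ`-span of the monomials indexed by `𝓘_j^{r,s}`. Monomials multiply by
adding their multi-indices, and both `j` and `r` are additive in the multi-index, so the product of
the spans for `(j,r)` and `(j̃,r̃)` lies in the span for `(j+j̃,r+r̃)`. Padding a multi-index with
zero exponents leaves its monomial unchanged, so `D_j^{r,s}` grows with `s`; this moves both factors
to `t = max(s,s̃)` and the product on to `s+s̃-(1,1) ≥ t`.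
-/

open Function

@[to_additive]
theorem Function.Injective.prod_comp_extend_zero {ι κ N M : Type*} [Fintype ι] [Fintype κ]
    [Zero N] [CommMonoid M] {e : ι → κ} (he : Injective e) (α : ι → N) (F : κ → N → M)
    (hF : ∀ k, F k 0 = 1) : ∏ k, F k (extend e α 0 k) = ∏ i, F (e i) (α i) := by
  classical
  rw [← Finset.prod_subset (Finset.subset_univ (Finset.univ.map ⟨e, he⟩)), Finset.prod_map]
  · exact Finset.prod_congr rfl fun i _ => by simp [he.extend_apply]
  · intro k _ hk
    have : ¬∃ i, e i = k := fun ⟨i, hi⟩ => hk (by simp [← hi])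
    rw [extend_apply' _ _ _ this, Pi.zero_apply, hF]

abbrev MultiIndex (s : ℕ × ℕ) := (Fin s.1 → ℕ) × (Fin s.2 → ℕ)

namespace MultiIndex

variable {s t : ℕ × ℕ}

noncomputable def pad (h₁ : s.1 ≤ t.1) (h₂ : s.2 ≤ t.2) (α : MultiIndex s) : MultiIndex t :=
  (extend (Fin.castLE h₁) α.1 0, extend (Fin.castLE h₂) α.2 0)

theorem pad_mem_Iset {j r : ℕ × ℕ} (h₁ : s.1 ≤ t.1) (h₂ : s.2 ≤ t.2) {α : MultiIndex s}
    (hα : α ∈ Iset j r s) : pad h₁ h₂ α ∈ Iset j r t := by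
  obtain ⟨hj₁, hj₂, hr₁, hr₂⟩ := hα
  refine ⟨?_, ?_, ?_, ?_⟩
  · rw [← hj₁]
    exact (Fin.castLE_injective h₁).sum_comp_extend_zero α.1 (fun _ a => a) fun _ => rfl
  · rw [← hj₂]
    exact (Fin.castLE_injective h₂).sum_comp_extend_zero α.2 (fun _ a => a) fun _ => rfl
  · rw [← hr₁]
    exact (Fin.castLE_injective h₁).sum_comp_extend_zero α.1 (fun p a => (p.1 + 1) * a)
      fun _ => mul_zero _
  · rw [← hr₂]
    exact (Fin.castLE_injective h₂).sum_comp_extend_zero α.2 (fun p a => (p.1 + 1) * a)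
      fun _ => mul_zero _

theorem add_mem_Iset {j r j' r' : ℕ × ℕ} {α α' : MultiIndex t}
    (hα : α ∈ Iset j r t) (hα' : α' ∈ Iset j' r' t) : α + α' ∈ Iset (j + j') (r + r') t := by
  obtain ⟨a₁, a₂, a₃, a₄⟩ := hα
  obtain ⟨b₁, b₂, b₃, b₄⟩ := hα'
  refine ⟨?_, ?_, ?_, ?_⟩ <;>
    simp only [Prod.fst_add, Prod.snd_add, Pi.add_apply, Nat.mul_add, Finset.sum_add_distrib,
      a₁, a₂, a₃, a₄, b₁, b₂, b₃, b₄]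

end MultiIndex

open MultiIndex

variable {s t : ℕ × ℕ} (f g : ℝ → ℂ)

theorem Dmonomial_pad (h₁ : s.1 ≤ t.1) (h₂ : s.2 ≤ t.2) (α : MultiIndex s) :
    Dmonomial t f g (pad h₁ h₂ α) = Dmonomial s f g α := by
  funext x
  simp only [Dmonomial, pad]
  rw [(Fin.castLE_injective h₁).prod_comp_extend_zero α.1
      (fun p a => iteratedDeriv (p.1 + 1) f x ^ a) fun _ => pow_zero _,
    (Fin.castLE_injective h₂).prod_comp_extend_zero α.2
      (fun p a => iteratedDeriv (p.1 + 1) g x ^ a) fun _ => pow_zero _]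
  rfl

theorem Dmonomial_add (α α' : MultiIndex t) :
    Dmonomial t f g (α + α') = Dmonomial t f g α * Dmonomial t f g α' := by
  funext x
  simp only [Dmonomial, Pi.mul_apply, Prod.fst_add, Prod.snd_add, Pi.add_apply, pow_add,
    Finset.prod_mul_distrib]
  ring

theorem linearCombination_Dmonomial (l : MultiIndex s →₀ ℂ) :
    Finsupp.linearCombination ℂ (Dmonomial s f g) l =
      fun x => ∑ᶠ α, l α * Dmonomial s f g α x := by
  funext x
  rw [Finsupp.linearCombination_apply, Finsupp.sum, Finset.sum_apply,
    finsum_eq_sum_of_support_subset (s := l.support) _ fun α hα => by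
      simpa using support_mul_subset_left _ _ hα]
  rfl

theorem Dset_eq_span (j r s : ℕ × ℕ) :
    Dset j r s f g = Submodule.span ℂ (Dmonomial s f g '' Iset j r s) := by
  ext u
  rw [SetLike.mem_coe, Finsupp.mem_span_image_iff_linearCombination]
  constructor
  · rintro ⟨c, hc, hcI, rfl⟩
    refine ⟨Finsupp.ofSupportFinite c hc, fun α hα => hcI α ?_, ?_⟩
    · simpa [Finsupp.ofSupportFinite_coe] using hα
    · rw [linearCombination_Dmonomial, Finsupp.ofSupportFinite_coe]
  · rintro ⟨l, hl, rfl⟩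
    exact ⟨l, l.hasFiniteSupport, fun α hα => hl (by simpa using hα),
      linearCombination_Dmonomial f g l⟩

variable {f g}

theorem Dset_mono {j r : ℕ × ℕ} (h₁ : s.1 ≤ t.1) (h₂ : s.2 ≤ t.2) :
    Dset j r s f g ⊆ Dset j r t f g := by
  rw [Dset_eq_span, Dset_eq_span, SetLike.coe_subset_coe, Submodule.span_le]
  rintro _ ⟨α, hα, rfl⟩
  rw [← Dmonomial_pad f g h₁ h₂]
  exact Submodule.subset_span ⟨_, pad_mem_Iset h₁ h₂ hα, rfl⟩

theorem mul_mem_Dset {j r j' r' : ℕ × ℕ} {u u' : ℝ → ℂ}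
    (hu : u ∈ Dset j r t f g) (hu' : u' ∈ Dset j' r' t f g) :
    u * u' ∈ Dset (j + j') (r + r') t f g := by
  rw [Dset_eq_span, SetLike.mem_coe] at *
  have := Submodule.mul_mem_mul hu hu'
  rw [Submodule.span_mul_span] at this
  refine Submodule.span_mono ?_ this
  rintro _ ⟨_, ⟨α, hα, rfl⟩, _, ⟨α', hα', rfl⟩, rfl⟩
  exact ⟨α + α', add_mem_Iset hα hα', Dmonomial_add f g α α'⟩

theorem statement11_general (s s' : ℕ × ℕ) (hs1 : 1 ≤ s.1) (hs2 : 1 ≤ s.2)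
    (hs1' : 1 ≤ s'.1) (hs2' : 1 ≤ s'.2) (j r j' r' : ℕ × ℕ)
    (f g : ℝ → ℂ)
    (u u' : ℝ → ℂ) (hu : u ∈ Dset j r s f g) (hu' : u' ∈ Dset j' r' s' f g) :
    (fun x => u x * u' x) ∈ Dset (j + j') (r + r') (max s.1 s'.1, max s.2 s'.2) f g ∧
      (fun x => u x * u' x) ∈ Dset (j + j') (r + r') (s + s' - (1, 1)) f g := by
  have hmax : u * u' ∈ Dset (j + j') (r + r') (max s.1 s'.1, max s.2 s'.2) f g :=
    mul_mem_Dset (Dset_mono (le_max_left _ _) (le_max_left _ _) hu)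
      (Dset_mono (le_max_right _ _) (le_max_right _ _) hu')
  exact ⟨hmax, Dset_mono (by dsimp; omega) (by dsimp; omega) hmax⟩

/-- If `u ∈ D_j^{r,s}(f,g)` and `ũ ∈ D_{j̃}^{r̃,s̃}(f,g)`, then
`u·ũ ∈ D_{j+j̃}^{r+r̃,max{s,s̃}}(f,g)` and consequently
`u·ũ ∈ D_{j+j̃}^{r+r̃,s+s̃−(1,1)}(f,g)`. -/
theorem statement11 (s s' : ℕ × ℕ) (hs1 : 1 ≤ s.1) (hs2 : 1 ≤ s.2)
    (hs1' : 1 ≤ s'.1) (hs2' : 1 ≤ s'.2) (j r j' r' : ℕ × ℕ)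
    (f g : ℝ → ℂ) (hf : ContDiff ℝ (max s.1 s'.1) f) (hg : ContDiff ℝ (max s.2 s'.2) g)
    (u u' : ℝ → ℂ) (hu : u ∈ Dset j r s f g) (hu' : u' ∈ Dset j' r' s' f g) :
    (fun x => u x * u' x) ∈ Dset (j + j') (r + r') (max s.1 s'.1, max s.2 s'.2) f g ∧
      (fun x => u x * u' x) ∈ Dset (j + j') (r + r') (s + s' - (1, 1)) f g :=
  statement11_general s s' hs1 hs2 hs1' hs2' j r j' r' f g u u' hu hu'
end

section
/- Let m ≥ 0, α, β ∈ ℝ, λ := α + iβ, and let a, b ∈ ℂ satisfy Im a = Im b =: 𝒱, α − m − Re a > 0 and α + m − Re b > 0. Set V_λ := (λ−m−a)(λ+m−b). Then V_λ ∉ (−∞,0], and Re(i V_λ^{1/2}) = (𝒱−β)(2α − Re a − Re b) / (√2 · (|V_λ| + Re V_λ)^{1/2}). Consequently: if 𝒱 ≥ β then Re(i V_λ^{1/2}) ≥ 𝒱 − β, and if 𝒱 ≤ β then Re(i V_λ^{1/2}) ≤ 𝒱 − β. If moreover c|α| ≤ α − m − Re a ≤ C|α| and c|α| ≤ α + m −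 Re b ≤ C|α| for some constants 0 < c ≤ C, then |Re(i V_λ^{1/2})| ≤ (C/c)|𝒱 − β|. -/
/-!
Write `λ - m - a = p + i t` and `λ + m - b = q + i t` with `p, q > 0` and `t = β - 𝒱`, so that
`V_λ = (p + i t)(q + i t)` and `Re(i V_λ^{1/2}) = -t (p + q) / D` with `D = √2 · (|V_λ| + Re V_λ)^{1/2}`.
Cauchy–Schwarz and AM–GM for `|p + i t| |q + i t|` give `4pq ≤ D² ≤ (p + q)²`; the upper bound
yields the one-sided estimates and the lower bound `D ≥ 2√(pq)` the two-sided one.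
-/

/-- The principal branch of the complex square root, for `z ∉ (−∞,0]`:
`√z = 2^{−1/2}(|z|+Re z)^{1/2} + i·2^{−1/2}·Im z·(|z|+Re z)^{−1/2}`. -/
noncomputable def psqrt (z : ℂ) : ℂ :=
  (Real.sqrt (‖z‖ + z.re) / Real.sqrt 2 : ℝ) +
    Complex.I * ((z.im / (Real.sqrt 2 * Real.sqrt (‖z‖ + z.re)) : ℝ) : ℂ)

open Complex ComplexConjugate

lemma Real.le_sqrt_mul_of_le_of_le {x p q : ℝ} (hp : x ≤ p) (hq : x ≤ q) : x ≤ √(p * q) := by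
  rcases le_or_gt x 0 with hx | hx
  · exact hx.trans (Real.sqrt_nonneg _)
  · rw [Real.le_sqrt' hx, sq]
    exact mul_le_mul hp hq hx.le (hx.trans_le hp).le

lemma re_I_mul_psqrt (z : ℂ) : (I * psqrt z).re = -z.im / (√2 * √(‖z‖ + z.re)) := by
  rw [psqrt, mul_re, I_re, I_im, add_im, ofReal_im, mul_im, I_re, I_im, ofReal_re, ofReal_im]
  ring

lemma re_mul_re_add_im_mul_im_le_norm_mul (z w : ℂ) : z.re * w.re + z.im * w.im ≤ ‖z‖ * ‖w‖ :=
  calc z.re * w.re + z.im * w.im = (z * conj w).re := by simp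
    _ ≤ ‖z * conj w‖ := re_le_norm _
    _ = ‖z‖ * ‖w‖ := by rw [norm_mul, norm_conj]

lemma four_mul_re_mul_re_le (z w : ℂ) : 4 * (z.re * w.re) ≤ 2 * (‖z * w‖ + (z * w).re) := by
  rw [norm_mul, mul_re]
  linarith [re_mul_re_add_im_mul_im_le_norm_mul z w]

lemma two_mul_sqrt_re_mul_re_le (z w : ℂ) :
    2 * √(z.re * w.re) ≤ √2 * √(‖z * w‖ + (z * w).re) := by
  calc 2 * √(z.re * w.re) = √(2 ^ 2 * (z.re * w.re)) := by
        rw [Real.sqrt_mul (sq_nonneg 2), Real.sqrt_sq zero_le_two]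
    _ ≤ √(2 * (‖z * w‖ + (z * w).re)) :=
        Real.sqrt_le_sqrt (by linarith [four_mul_re_mul_re_le z w])
    _ = √2 * √(‖z * w‖ + (z * w).re) := Real.sqrt_mul zero_le_two _

lemma sqrt_two_mul_sqrt_norm_mul_add_re_pos {z w : ℂ} (hz : 0 < z.re) (hw : 0 < w.re) :
    0 < √2 * √(‖z * w‖ + (z * w).re) :=
  (mul_pos two_pos (Real.sqrt_pos.mpr (mul_pos hz hw))).trans_le (two_mul_sqrt_re_mul_re_le z w)

section

variable {z w : ℂ}

lemma two_mul_norm_mul_add_re_le (hzw : z.im = w.im) :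
    2 * (‖z * w‖ + (z * w).re) ≤ (z.re + w.re) ^ 2 := by
  have hamgm := two_mul_le_add_sq ‖z‖ ‖w‖
  rw [norm_mul, mul_re, ← hzw]
  rw [Complex.sq_norm, Complex.sq_norm, normSq_apply, normSq_apply, ← hzw] at hamgm
  linarith

lemma sqrt_two_mul_sqrt_norm_mul_add_re_le (hzw : z.im = w.im) (hz : 0 ≤ z.re) (hw : 0 ≤ w.re) :
    √2 * √(‖z * w‖ + (z * w).re) ≤ z.re + w.re := by
  rw [← Real.sqrt_mul zero_le_two, ← Real.sqrt_sq (add_nonneg hz hw)]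
  exact Real.sqrt_le_sqrt (two_mul_norm_mul_add_re_le hzw)

lemma mul_mem_slitPlane (hzw : z.im = w.im) (hz : 0 < z.re) (hw : 0 < w.re) :
    z * w ∈ slitPlane := by
  rw [mem_slitPlane_iff, mul_re, mul_im, ← hzw]
  rcases eq_or_ne z.im 0 with ht | ht
  · left
    simpa [ht] using mul_pos hz hw
  · right
    rw [show z.re * z.im + z.im * w.re = z.im * (z.re + w.re) by ring]
    exact mul_ne_zero ht (by linarith)

lemma re_I_mul_psqrt_mul (hzw : z.im = w.im) :
    (I * psqrt (z * w)).re = -z.im * (z.re + w.re) / (√2 * √(‖z * w‖ + (z * w).re)) := by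
  rw [re_I_mul_psqrt, mul_im, ← hzw]
  ring

lemma neg_im_le_re_I_mul_psqrt_mul (hzw : z.im = w.im) (hz : 0 < z.re) (hw : 0 < w.re)
    (him : z.im ≤ 0) : -z.im ≤ (I * psqrt (z * w)).re := by
  rw [re_I_mul_psqrt_mul hzw, le_div_iff₀ (sqrt_two_mul_sqrt_norm_mul_add_re_pos hz hw)]
  exact mul_le_mul_of_nonneg_left (sqrt_two_mul_sqrt_norm_mul_add_re_le hzw hz.le hw.le)
    (neg_nonneg.mpr him)

lemma re_I_mul_psqrt_mul_le_neg_im (hzw : z.im = w.im) (hz : 0 < z.re) (hw : 0 < w.re)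
    (him : 0 ≤ z.im) : (I * psqrt (z * w)).re ≤ -z.im := by
  rw [re_I_mul_psqrt_mul hzw, div_le_iff₀ (sqrt_two_mul_sqrt_norm_mul_add_re_pos hz hw)]
  exact mul_le_mul_of_nonpos_left (sqrt_two_mul_sqrt_norm_mul_add_re_le hzw hz.le hw.le)
    (neg_nonpos.mpr him)

lemma abs_re_I_mul_psqrt_mul_le (hzw : z.im = w.im) (hz : 0 < z.re) (hw : 0 < w.re)
    {c C s : ℝ} (hc : 0 < c) (hcC : c ≤ C) (hz_lower : c * s ≤ z.re) (hz_upper : z.re ≤ C * s)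
    (hw_lower : c * s ≤ w.re) (hw_upper : w.re ≤ C * s) :
    |(I * psqrt (z * w)).re| ≤ C / c * |z.im| := by
  set D := √2 * √(‖z * w‖ + (z * w).re)
  have hD : 0 < D := sqrt_two_mul_sqrt_norm_mul_add_re_pos hz hw
  have hratio : z.re + w.re ≤ C / c * D := by
    rw [div_mul_eq_mul_div, le_div_iff₀ hc]
    calc (z.re + w.re) * c ≤ (2 * (C * s)) * c := by gcongr; linarith
      _ = C * (2 * (c * s)) := by ring
      _ ≤ C * (2 * √(z.re * w.re)) := by
          gcongr
          · linarith
          · exact Real.le_sqrt_mul_of_le_of_le hz_lower hw_lower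
      _ ≤ C * D := by
          gcongr
          · linarith
          · exact two_mul_sqrt_re_mul_re_le z w
  rw [re_I_mul_psqrt_mul hzw, abs_div, abs_mul, abs_neg, abs_of_pos (add_pos hz hw),
    abs_of_pos hD, div_le_iff₀ hD]
  calc |z.im| * (z.re + w.re) ≤ |z.im| * (C / c * D) := by gcongr
    _ = C / c * |z.im| * D := by ring

end

theorem statement18_general (m α β : ℝ) (a b : ℂ) (hab : a.im = b.im)
    (ha : 0 < α - m - a.re) (hb : 0 < α + m - b.re) :
    (¬(((((α : ℂ) + (β : ℂ) * Complex.I) - (m : ℂ) - a) *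
          (((α : ℂ) + (β : ℂ) * Complex.I) + (m : ℂ) - b)).im = 0 ∧
        ((((α : ℂ) + (β : ℂ) * Complex.I) - (m : ℂ) - a) *
          (((α : ℂ) + (β : ℂ) * Complex.I) + (m : ℂ) - b)).re ≤ 0)) ∧
    (Complex.I * psqrt ((((α : ℂ) + (β : ℂ) * Complex.I) - (m : ℂ) - a) *
        (((α : ℂ) + (β : ℂ) * Complex.I) + (m : ℂ) - b))).re =
      (a.im - β) * (2 * α - a.re - b.re) /
        (Real.sqrt 2 * Real.sqrt
          (‖(((α : ℂ) + (β : ℂ) * Complex.I) - (m : ℂ) - a) *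
              (((α : ℂ) + (β : ℂ) * Complex.I) + (m : ℂ) - b)‖ +
            ((((α : ℂ) + (β : ℂ) * Complex.I) - (m : ℂ) - a) *
              (((α : ℂ) + (β : ℂ) * Complex.I) + (m : ℂ) - b)).re)) ∧
    (β ≤ a.im →
      a.im - β ≤ (Complex.I * psqrt ((((α : ℂ) + (β : ℂ) * Complex.I) - (m : ℂ) - a) *
        (((α : ℂ) + (β : ℂ) * Complex.I) + (m : ℂ) - b))).re) ∧
    (a.im ≤ β →
      (Complex.I * psqrt ((((α : ℂ) + (β : ℂ) * Complex.I) - (m : ℂ) - a) *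
        (((α : ℂ) + (β : ℂ) * Complex.I) + (m : ℂ) - b))).re ≤ a.im - β) ∧
    (∀ c C : ℝ, 0 < c → c ≤ C →
      c * |α| ≤ α - m - a.re → α - m - a.re ≤ C * |α| →
      c * |α| ≤ α + m - b.re → α + m - b.re ≤ C * |α| →
      |(Complex.I * psqrt ((((α : ℂ) + (β : ℂ) * Complex.I) - (m : ℂ) - a) *
          (((α : ℂ) + (β : ℂ) * Complex.I) + (m : ℂ) - b))).re| ≤ (C / c) * |a.im - β|) := by
  set z : ℂ := (α : ℂ) + (β : ℂ) * I - (m : ℂ) - a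
  set w : ℂ := (α : ℂ) + (β : ℂ) * I + (m : ℂ) - b
  have hz_re : z.re = α - m - a.re := by simp [z]
  have hw_re : w.re = α + m - b.re := by simp [w]
  have hz_im : -z.im = a.im - β := by simp [z]
  have hzw : z.im = w.im := by simp [z, w, hab]
  rw [← hz_re] at ha ⊢
  rw [← hw_re] at hb ⊢
  rw [← hz_im]
  refine ⟨?_, ?_, ?_, ?_, ?_⟩
  · rintro ⟨him, hre⟩
    exact (mem_slitPlane_iff.mp (mul_mem_slitPlane hzw ha hb)).elim hre.not_gt (· him)
  · rw [re_I_mul_psqrt_mul hzw, show 2 * α - a.re - b.re = z.re + w.re by rw [hz_re, hw_re]; ring]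
  · exact fun h => neg_im_le_re_I_mul_psqrt_mul hzw ha hb (by linarith)
  · exact fun h => re_I_mul_psqrt_mul_le_neg_im hzw ha hb (by linarith)
  · intro c C hc hcC hz_lower hz_upper hw_lower hw_upper
    rw [abs_neg]
    exact abs_re_I_mul_psqrt_mul_le hzw ha hb hc hcC hz_lower hz_upper hw_lower hw_upper

/-- Let `m ≥ 0`, `α, β ∈ ℝ`, `λ := α+iβ`, and `a, b ∈ ℂ` with
`Im a = Im b =: 𝒱`, `α−m−Re a > 0`, `α+m−Re b > 0`, and `V_λ := (λ−m−a)(λ+m−b)`.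
Then `V_λ ∉ (−∞,0]`, `Re(i V_λ^{1/2}) = (𝒱−β)(2α−Re a−Re b)/(√2·(|V_λ|+Re V_λ)^{1/2})`;
if `𝒱 ≥ β` then `Re(i V_λ^{1/2}) ≥ 𝒱−β`, if `𝒱 ≤ β` then `Re(i V_λ^{1/2}) ≤ 𝒱−β`; and if
`c|α| ≤ α−m−Re a ≤ C|α|` and `c|α| ≤ α+m−Re b ≤ C|α|` with `0 < c ≤ C`, then
`|Re(i V_λ^{1/2})| ≤ (C/c)|𝒱−β|`. -/
theorem statement18 (m α β : ℝ) (hm : 0 ≤ m) (a b : ℂ) (hab : a.im = b.im)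
    (ha : 0 < α - m - a.re) (hb : 0 < α + m - b.re) :
    (¬(((((α : ℂ) + (β : ℂ) * Complex.I) - (m : ℂ) - a) *
          (((α : ℂ) + (β : ℂ) * Complex.I) + (m : ℂ) - b)).im = 0 ∧
        ((((α : ℂ) + (β : ℂ) * Complex.I) - (m : ℂ) - a) *
          (((α : ℂ) + (β : ℂ) * Complex.I) + (m : ℂ) - b)).re ≤ 0)) ∧
    (Complex.I * psqrt ((((α : ℂ) + (β : ℂ) * Complex.I) - (m : ℂ) - a) *
        (((α : ℂ) + (β : ℂ) * Complex.I) + (m : ℂ) - b))).re =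
      (a.im - β) * (2 * α - a.re - b.re) /
        (Real.sqrt 2 * Real.sqrt
          (‖(((α : ℂ) + (β : ℂ) * Complex.I) - (m : ℂ) - a) *
              (((α : ℂ) + (β : ℂ) * Complex.I) + (m : ℂ) - b)‖ +
            ((((α : ℂ) + (β : ℂ) * Complex.I) - (m : ℂ) - a) *
              (((α : ℂ) + (β : ℂ) * Complex.I) + (m : ℂ) - b)).re)) ∧
    (β ≤ a.im →
      a.im - β ≤ (Complex.I * psqrt ((((α : ℂ) + (β : ℂ) * Complex.I) - (m : ℂ) - a) *
        (((α : ℂ) + (β : ℂ) * Complex.I) + (m : ℂ) - b))).re) ∧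
    (a.im ≤ β →
      (Complex.I * psqrt ((((α : ℂ) + (β : ℂ) * Complex.I) - (m : ℂ) - a) *
        (((α : ℂ) + (β : ℂ) * Complex.I) + (m : ℂ) - b))).re ≤ a.im - β) ∧
    (∀ c C : ℝ, 0 < c → c ≤ C →
      c * |α| ≤ α - m - a.re → α - m - a.re ≤ C * |α| →
      c * |α| ≤ α + m - b.re → α + m - b.re ≤ C * |α| →
      |(Complex.I * psqrt ((((α : ℂ) + (β : ℂ) * Complex.I) - (m : ℂ) - a) *
          (((α : ℂ) + (β : ℂ) * Complex.I) + (m : ℂ) - b))).re| ≤ (C / c) * |a.im - β|) :=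
  statement18_general m α β a b hab ha hb
end
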